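/- Let k be a field, G a finite group, w a finite-dimensional kG-module, and X any kG-module. Then the evaluation map ev_X : w ⊗_k w* ⊗_k X → X, v ⊗ f ⊗ x ↦ f(v)·x, is a kG-linear P(w)-precover of X: its source w ⊗ w* ⊗ X is w-projective, and every kG-homomorphism Z → X from a w-projective module Z factors through ev_X. (The class P(w) is pre-covering.) -/

import Mathlib

open CategoryTheory MonoidalCategory Limits

/-- `X` is `w`-projective: `X` is a direct summand of `w ⊗ Y` (diagonal `G`-action)
for some `kG`-module `Y`. -/
def IsRelProjective {k G : Type} [Field k] [Group G] (w X : Rep k G) : Prop :=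
  ∃ (Y : Rep k G) (i : X ⟶ w ⊗ Y) (r : w ⊗ Y ⟶ X), i ≫ r = 𝟙 X

/-- `f` factors through some `w`-projective module. -/
def FactorsThroughRelProj {k G : Type} [Field k] [Group G] (w : Rep k G)
    {X Y : Rep k G} (f : X ⟶ Y) : Prop :=
  ∃ (Z : Rep k G) (g : X ⟶ Z) (h : Z ⟶ Y), IsRelProjective w Z ∧ g ≫ h = f

/-- The evaluation map `w ⊗ w* ⊗ X → X`, `v ⊗ f ⊗ x ↦ f(v) • x`, as a `k`-linear map. -/
noncomputable def evLin {k G : Type} [Field k] [Group G] (w X : Rep k G) :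
    (((w ⊗ Rep.of w.ρ.dual) ⊗ X).V : Type) →ₗ[k] (X.V : Type) :=
  (TensorProduct.lid k X.V).toLinearMap ∘ₗ
    TensorProduct.map (contractRight k w.V) LinearMap.id

/-!
Let `ε : w ⊗ w* → k` be the contraction and `η : k → w* ⊗ w` the coevaluation, which sends `1`
to the element corresponding to `id_w` under `w* ⊗ w ≅ End_k(w)`; that element is `G`-invariant
because this isomorphism is `G`-equivariant. The zig-zag identity `(ε ⊗ w) ∘ (w ⊗ η) = id_w`
makes `ev_{w ⊗ Y}` a split epimorphism for every `Y`, hence so is `ev_Z` for every retract `Z`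
of some `w ⊗ Y`. By naturality of `ev`, a map `f : Z → X` then factors as
`f = ev_X ∘ (w ⊗ w* ⊗ f) ∘ s`, where `s` is a section of `ev_Z`.
-/

universe u v

theorem lid_rTensor_contractRight_assoc_symm {R M N : Type*} [CommSemiring R]
    [AddCommMonoid M] [Module R M] [AddCommMonoid N] [Module R N]
    (m : M) (t : TensorProduct R (Module.Dual R M) N) :
    TensorProduct.lid R N (LinearMap.rTensor N (contractRight R M)
      ((TensorProduct.assoc R M (Module.Dual R M) N).symm (m ⊗ₜ t))) =
      dualTensorHom R M N t m := by
  induction t using TensorProduct.induction_on with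
  | zero => simp
  | tmul f n => simp [contractRight_apply, dualTensorHom_apply]
  | add s t hs ht => simp [TensorProduct.tmul_add, hs, ht]

theorem Representation.dualTensorHomEquiv_symm_id_mem_invariants {k G V : Type*}
    [CommRing k] [Group G] [AddCommGroup V] [Module k V] [Module.Finite k V]
    [Module.Projective k V] (ρ : Representation k G V) :
    (dualTensorHomEquiv k V V).symm LinearMap.id ∈ (ρ.dual.tprod ρ).invariants := by
  intro g
  apply (dualTensorHomEquiv k V V).injective
  change dualTensorHom k V V (TensorProduct.map (ρ.dual g) (ρ g) _) = _
  rw [← LinearMap.comp_apply, dualTensorHom_comm]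
  ext v
  simp [Representation.self_inv_apply]

namespace Rep

variable {k : Type u} {G : Type v} [CommRing k] [Group G]

noncomputable def contraction (w : Rep k G) : w ⊗ Rep.of w.ρ.dual ⟶ 𝟙_ (Rep k G) :=
  ofHom ⟨contractRight k w.V, fun g => TensorProduct.ext' fun v f => by
    simp [Module.Dual.transpose_apply, Representation.inv_self_apply]⟩

noncomputable def coevaluation (w : Rep k G) [Module.Finite k w.V] [Module.Projective k w.V] :
    𝟙_ (Rep k G) ⟶ Rep.of w.ρ.dual ⊗ w :=
  ofHom ⟨LinearMap.toSpanSingleton k _ ((dualTensorHomEquiv k w.V w.V).symm LinearMap.id),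
    fun g => by
      ext
      simpa using (w.ρ.dualTensorHomEquiv_symm_id_mem_invariants g).symm⟩

theorem coevaluation_contraction (w : Rep k G) [Module.Finite k w.V] [Module.Projective k w.V] :
    (ρ_ w).inv ≫ (w ◁ coevaluation w) ≫ (α_ _ _ _).inv ≫ (contraction w ▷ w) ≫ (λ_ w).hom =
      𝟙 w := by
  ext v
  simp [coevaluation, contraction, lid_rTensor_contractRight_assoc_symm]

noncomputable def evaluation (w X : Rep k G) : (w ⊗ Rep.of w.ρ.dual) ⊗ X ⟶ X :=
  (contraction w ▷ X) ≫ (λ_ X).hom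

theorem evaluation_naturality (w : Rep k G) {X Y : Rep k G} (f : X ⟶ Y) :
    ((w ⊗ Rep.of w.ρ.dual) ◁ f) ≫ evaluation w Y = evaluation w X ≫ f := by
  rw [evaluation, evaluation, whisker_exchange_assoc, leftUnitor_naturality, Category.assoc]

noncomputable def evaluationTensorSection (w Y : Rep k G) [Module.Finite k w.V]
    [Module.Projective k w.V] : w ⊗ Y ⟶ (w ⊗ Rep.of w.ρ.dual) ⊗ (w ⊗ Y) :=
  ((ρ_ w).inv ≫ (w ◁ coevaluation w) ≫ (α_ _ _ _).inv) ▷ Y ≫ (α_ _ _ _).hom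

theorem evaluationTensorSection_evaluation (w Y : Rep k G) [Module.Finite k w.V]
    [Module.Projective k w.V] :
    evaluationTensorSection w Y ≫ evaluation w (w ⊗ Y) = 𝟙 _ :=
  calc _ = ((ρ_ w).inv ≫ (w ◁ coevaluation w) ≫ (α_ _ _ _).inv ≫ (contraction w ▷ w) ≫
        (λ_ w).hom) ▷ Y := by
        simp [evaluationTensorSection, evaluation]
    _ = 𝟙 _ := by rw [coevaluation_contraction, id_whiskerRight]

end Rep

theorem isRelProjective_of_iso {k G : Type} [Field k] [Group G] {w X Y : Rep k G}
    (e : X ≅ w ⊗ Y) : IsRelProjective w X :=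
  ⟨Y, e.hom, e.inv, e.hom_inv_id⟩

theorem IsRelProjective.isSplitEpi_evaluation {k G : Type} [Field k] [Group G] {w Z : Rep k G}
    [FiniteDimensional k w.V] (hZ : IsRelProjective w Z) : IsSplitEpi (Rep.evaluation w Z) := by
  obtain ⟨Y, i, r, hir⟩ := hZ
  refine ⟨⟨i ≫ Rep.evaluationTensorSection w Y ≫ ((w ⊗ Rep.of w.ρ.dual) ◁ r), ?_⟩⟩
  rw [Category.assoc, Category.assoc, Rep.evaluation_naturality,
    ← Category.assoc (Rep.evaluationTensorSection w Y), Rep.evaluationTensorSection_evaluation,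
    Category.id_comp, hir]

theorem evaluation_is_precover_general (k G : Type) [Field k] [Group G]
    (w : Rep k G) [FiniteDimensional k w.V] (X : Rep k G) :
    ∃ ε : (w ⊗ Rep.of w.ρ.dual) ⊗ X ⟶ X,
      ε.hom = evLin w X ∧
      IsRelProjective w ((w ⊗ Rep.of w.ρ.dual) ⊗ X) ∧
      ∀ (Z : Rep k G), IsRelProjective w Z →
        ∀ f : Z ⟶ X, ∃ g : Z ⟶ (w ⊗ Rep.of w.ρ.dual) ⊗ X, g ≫ ε = f := by
  refine ⟨Rep.evaluation w X, rfl, isRelProjective_of_iso (α_ _ _ _), fun Z hZ f => ?_⟩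
  have := hZ.isSplitEpi_evaluation
  exact ⟨section_ (Rep.evaluation w Z) ≫ ((w ⊗ Rep.of w.ρ.dual) ◁ f), by
    rw [Category.assoc, Rep.evaluation_naturality, IsSplitEpi.id_assoc]⟩

/-- The evaluation map `ev_X : w ⊗ w* ⊗ X → X` is a `kG`-linear `P(w)`-precover of `X`:
it is `G`-equivariant, its source is `w`-projective, and every `kG`-homomorphism from a
`w`-projective module `Z` to `X` factors through it. -/
theorem evaluation_is_precover (k G : Type) [Field k] [Group G] [Fintype G]
    (w : Rep k G) [FiniteDimensional k w.V] (X : Rep k G) :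
    ∃ ε : (w ⊗ Rep.of w.ρ.dual) ⊗ X ⟶ X,
      ε.hom = evLin w X ∧
      IsRelProjective w ((w ⊗ Rep.of w.ρ.dual) ⊗ X) ∧
      ∀ (Z : Rep k G), IsRelProjective w Z →
        ∀ f : Z ⟶ X, ∃ g : Z ⟶ (w ⊗ Rep.of w.ρ.dual) ⊗ X, g ≫ ε = f :=
  evaluation_is_precover_general k G w X
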